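/- arXiv:2601.03428 — 2 statements merged into one kernel-verified Lean document; each statement's English description precedes it below -/
import Mathlib

section
/- In the no-data testing-an-innovation setup with fully known control distribution, assume q0 = 1/2. Then every δ ∈ [0,1] satisfies sup over μ1 of R(δ,μ1) = 1/2; consequently every δ ∈ [0,1] is minimax regret, with maximal regret 1/2. -/
open MeasureTheory Set

noncomputable section

/-- The set of `α`-quantiles of a Borel probability measure on `[0,1]`
(represented as a measure on `ℝ` giving mass 1 to `[0,1]`). -/
def quantSet (α : ℝ) (μ : Measure ℝ) : Set ℝ :=
  {q | q ∈ Icc (0 : ℝ) 1 ∧ α ≤ (μ (Icc 0 q)).toReal ∧ 1 - α ≤ (μ (Icc q 1)).toReal}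

/-- The `(α, r)`-quantile of `μ`: `r · sup Q(α,μ) + (1 - r) · inf Q(α,μ)`. -/
def quant (α r : ℝ) (μ : Measure ℝ) : ℝ :=
  r * sSup (quantSet α μ) + (1 - r) * sInf (quantSet α μ)

/-- `μ` is a Borel probability measure concentrated on `[0,1]`. -/
def IsProb01 (μ : Measure ℝ) : Prop :=
  IsProbabilityMeasure μ ∧ μ (Icc (0 : ℝ) 1) = 1

/-- The mixture `p · μ1 + (1 - p) · μ0`. -/
def mix (p : ℝ) (μ0 μ1 : Measure ℝ) : Measure ℝ :=
  ENNReal.ofReal p • μ1 + ENNReal.ofReal (1 - p) • μ0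

/-- The "Bernoulli" measure on `[0,1]`: mass `a` at `0` and mass `1 - a` at `1`. -/
def Ber (a : ℝ) : Measure ℝ :=
  ENNReal.ofReal a • Measure.dirac (0 : ℝ) + ENNReal.ofReal (1 - a) • Measure.dirac (1 : ℝ)

/-- Regret in the no-data testing-an-innovation setup with fully known control
distribution `μ0`, at `r = 0`. -/
def regretKC (α : ℝ) (μ0 : Measure ℝ) (δ : ℝ) (μ1 : Measure ℝ) : ℝ :=
  max (quant α 0 μ0) (quant α 0 μ1) - quant α 0 (mix δ μ0 μ1)

/-- The set of regret values of the no-data rule `δ` over all states `μ1`. -/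
def regretSetKC (α : ℝ) (μ0 : Measure ℝ) (δ : ℝ) : Set ℝ :=
  {v | ∃ μ1 : Measure ℝ, IsProb01 μ1 ∧ v = regretKC α μ0 δ μ1}

/-- The set `{q ∈ [0, q0] : δ + (1 - δ)·F0(q) ≥ α}` whose least element is `q(δ)`. -/
def thresholdSet (α : ℝ) (μ0 : Measure ℝ) (q0 δ : ℝ) : Set ℝ :=
  {q | q ∈ Icc (0 : ℝ) q0 ∧ α ≤ δ + (1 - δ) * (μ0 (Icc 0 q)).toReal}

lemma quant_zero (α : ℝ) (μ : Measure ℝ) : quant α 0 μ = sInf (quantSet α μ) := by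
  simp [quant]

lemma mix_apply {δ : ℝ} (hδ : δ ∈ Icc (0:ℝ) 1) (μ0 μ1 : Measure ℝ)
    [IsFiniteMeasure μ0] [IsFiniteMeasure μ1] (s : Set ℝ) :
    ((mix δ μ0 μ1) s).toReal = δ * (μ1 s).toReal + (1 - δ) * (μ0 s).toReal := by
  have h1 : ENNReal.ofReal δ * μ1 s ≠ ⊤ :=
    ENNReal.mul_ne_top ENNReal.ofReal_ne_top (measure_ne_top _ _)
  have h2 : ENNReal.ofReal (1 - δ) * μ0 s ≠ ⊤ :=
    ENNReal.mul_ne_top ENNReal.ofReal_ne_top (measure_ne_top _ _)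
  simp only [mix, Measure.add_apply, Measure.smul_apply, smul_eq_mul]
  rw [ENNReal.toReal_add h1 h2, ENNReal.toReal_mul, ENNReal.toReal_mul,
    ENNReal.toReal_ofReal hδ.1, ENNReal.toReal_ofReal (by linarith [hδ.2])]

lemma isProb01_mix {δ : ℝ} (hδ : δ ∈ Icc (0:ℝ) 1) {μ0 μ1 : Measure ℝ}
    (h0 : IsProb01 μ0) (h1 : IsProb01 μ1) : IsProb01 (mix δ μ0 μ1) := by
  have key : ∀ s : Set ℝ, μ0 s = 1 → μ1 s = 1 → (mix δ μ0 μ1) s = 1 := by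
    intro s hs0 hs1
    simp only [mix, Measure.add_apply, Measure.smul_apply, smul_eq_mul, hs0, hs1, mul_one]
    rw [← ENNReal.ofReal_add hδ.1 (by linarith [hδ.2])]
    norm_num
  haveI := h0.1; haveI := h1.1
  refine ⟨⟨key univ (measure_univ) (measure_univ)⟩, key _ h0.2 h1.2⟩

lemma Ber_apply10 {a : ℝ} (ha : a ∈ Icc (0:ℝ) 1) {s : Set ℝ} (hs : MeasurableSet s)
    (h0 : (0:ℝ) ∈ s) (h1 : (1:ℝ) ∉ s) : ((Ber a) s).toReal = a := by
  simp only [Ber, Measure.add_apply, Measure.smul_apply, smul_eq_mul,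
    Measure.dirac_apply' _ hs, indicator_of_mem h0, indicator_of_notMem h1]
  simp [ENNReal.toReal_ofReal ha.1]

lemma Ber_apply01 {a : ℝ} (ha : a ∈ Icc (0:ℝ) 1) {s : Set ℝ} (hs : MeasurableSet s)
    (h0 : (0:ℝ) ∉ s) (h1 : (1:ℝ) ∈ s) : ((Ber a) s).toReal = 1 - a := by
  simp only [Ber, Measure.add_apply, Measure.smul_apply, smul_eq_mul,
    Measure.dirac_apply' _ hs, indicator_of_mem h1, indicator_of_notMem h0]
  simp [ENNReal.toReal_ofReal (by linarith [ha.2] : (0:ℝ) ≤ 1 - a)]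

lemma Ber_apply11 {a : ℝ} (ha : a ∈ Icc (0:ℝ) 1) {s : Set ℝ}
    (h0 : (0:ℝ) ∈ s) (h1 : (1:ℝ) ∈ s) : ((Ber a) s).toReal = 1 := by
  have : (Ber a) s = 1 := by
    simp only [Ber, Measure.add_apply, Measure.smul_apply, smul_eq_mul,
      Measure.dirac_apply_of_mem h0, Measure.dirac_apply_of_mem h1, mul_one]
    rw [← ENNReal.ofReal_add ha.1 (by linarith [ha.2])]
    norm_num
  simp [this]

lemma isProb01_Ber {a : ℝ} (ha : a ∈ Icc (0:ℝ) 1) : IsProb01 (Ber a) := by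
  have key : ∀ s : Set ℝ, (0:ℝ) ∈ s → (1:ℝ) ∈ s → (Ber a) s = 1 := by
    intro s h0 h1
    simp only [Ber, Measure.add_apply, Measure.smul_apply, smul_eq_mul,
      Measure.dirac_apply_of_mem h0, Measure.dirac_apply_of_mem h1, mul_one]
    rw [← ENNReal.ofReal_add ha.1 (by linarith [ha.2])]
    norm_num
  exact ⟨⟨key univ trivial trivial⟩, key _ (by norm_num) (by norm_num)⟩

lemma quantSet_inf_mem {α : ℝ} (hα : α ∈ Ioo (0:ℝ) 1) {ν : Measure ℝ} (hν : IsProb01 ν) :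
    sInf (quantSet α ν) ∈ quantSet α ν := by
  haveI := hν.1
  set S : Set ℝ := {q | q ∈ Icc (0:ℝ) 1 ∧ ENNReal.ofReal α ≤ ν (Icc 0 q)} with hS
  have hne : (1:ℝ) ∈ S := ⟨⟨zero_le_one, le_refl 1⟩, by
    rw [show Icc (0:ℝ) 1 = Icc 0 1 from rfl, hν.2]; exact ENNReal.ofReal_le_one.2 hα.2.le⟩
  have hbdd : BddBelow S := ⟨0, fun x hx => hx.1.1⟩
  set q := sInf S with hqdef
  have hq0 : 0 ≤ q := le_csInf ⟨1, hne⟩ (fun x hx => hx.1.1)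
  have hq1 : q ≤ 1 := csInf_le hbdd hne
  -- F condition at q
  have hFq : ENNReal.ofReal α ≤ ν (Icc 0 q) := by
    have hint : ⋂ n : ℕ, Icc (0:ℝ) (q + 1/(n+1)) = Icc 0 q := by
      ext x
      simp only [mem_iInter, mem_Icc]
      constructor
      · intro h
        refine ⟨(h 0).1, le_of_forall_pos_le_add fun ε hε => ?_⟩
        obtain ⟨n, hn⟩ := exists_nat_one_div_lt hε
        exact le_trans (h n).2 (by linarith)
      · intro h n
        have : (0:ℝ) < 1/(n+1) := by positivity
        exact ⟨h.1, by linarith [h.2]⟩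
    have hanti : Antitone (fun n : ℕ => Icc (0:ℝ) (q + 1/(n+1))) := by
      intro n m hnm
      apply Icc_subset_Icc_right
      have hc : ((n:ℝ)+1) ≤ (m:ℝ)+1 := by exact_mod_cast Nat.succ_le_succ hnm
      have : (1:ℝ)/(m+1) ≤ 1/(n+1) := one_div_le_one_div_of_le (by positivity) hc
      linarith
    have heq := hanti.measure_iInter (μ := ν)
      (fun n => (measurableSet_Icc).nullMeasurableSet) ⟨0, measure_ne_top ν _⟩
    rw [hint] at heq
    rw [heq]
    refine le_iInf fun n => ?_
    have hpos : (0:ℝ) < 1/(n+1) := by positivity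
    have hlt : q < q + 1/(n+1) := by linarith
    obtain ⟨x, hxS, hx⟩ := exists_lt_of_csInf_lt ⟨1, hne⟩ hlt
    exact le_trans hxS.2 (measure_mono (Icc_subset_Icc_right hx.le))
  -- Ico bound
  have hIco : ν (Ico 0 q) ≤ ENNReal.ofReal α := by
    have hunion : ⋃ n : ℕ, Icc (0:ℝ) (q - 1/(n+1)) = Ico 0 q := by
      ext x
      simp only [mem_iUnion, mem_Icc, mem_Ico]
      constructor
      · rintro ⟨n, h1, h2⟩
        have : (0:ℝ) < 1/(n+1) := by positivity
        exact ⟨h1, by linarith⟩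
      · rintro ⟨h1, h2⟩
        obtain ⟨n, hn⟩ := exists_nat_one_div_lt (sub_pos.2 h2)
        exact ⟨n, h1, by linarith⟩
    have hmono : Monotone (fun n : ℕ => Icc (0:ℝ) (q - 1/(n+1))) := by
      intro n m hnm
      apply Icc_subset_Icc_right
      have hc : ((n:ℝ)+1) ≤ (m:ℝ)+1 := by exact_mod_cast Nat.succ_le_succ hnm
      have : (1:ℝ)/(m+1) ≤ 1/(n+1) := one_div_le_one_div_of_le (by positivity) hc
      linarith
    have heq := hmono.measure_iUnion (μ := ν)
    rw [hunion] at heq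
    rw [heq]
    refine iSup_le fun n => ?_
    set t : ℝ := q - 1/(n+1) with ht
    rcases lt_or_ge t 0 with h | h
    · rw [Icc_eq_empty (by linarith)]; simp
    · have hpos : (0:ℝ) < 1/(n+1) := by positivity
      have htq : t < q := by rw [ht]; linarith
      have hnS : t ∉ S := notMem_of_lt_csInf htq hbdd
      have hmem : t ∈ Icc (0:ℝ) 1 := ⟨h, by linarith⟩
      by_contra hcon
      exact hnS ⟨hmem, le_of_not_ge hcon⟩
  -- G condition at q
  have hGq : ENNReal.ofReal (1 - α) ≤ ν (Icc q 1) := by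
    have hsub : Icc (0:ℝ) 1 ⊆ Ico 0 q ∪ Icc q 1 := by
      intro x hx
      rcases lt_or_ge x q with h | h
      · exact Or.inl ⟨hx.1, h⟩
      · exact Or.inr ⟨h, hx.2⟩
    have h1 : (1:ENNReal) ≤ ν (Ico 0 q) + ν (Icc q 1) := by
      calc (1:ENNReal) = ν (Icc 0 1) := hν.2.symm
        _ ≤ ν (Ico 0 q ∪ Icc q 1) := measure_mono hsub
        _ ≤ _ := measure_union_le _ _
    have h2 : ENNReal.ofReal (1 - α) + ENNReal.ofReal α ≤ ν (Icc q 1) + ENNReal.ofReal α := by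
      calc ENNReal.ofReal (1 - α) + ENNReal.ofReal α = 1 := by
            rw [← ENNReal.ofReal_add (by linarith [hα.2]) hα.1.le]; norm_num
        _ ≤ ν (Ico 0 q) + ν (Icc q 1) := h1
        _ ≤ ENNReal.ofReal α + ν (Icc q 1) := add_le_add hIco le_rfl
        _ = ν (Icc q 1) + ENNReal.ofReal α := add_comm _ _
    exact (ENNReal.add_le_add_iff_right ENNReal.ofReal_ne_top).1 h2
  have hqmem : q ∈ quantSet α ν := by
    refine ⟨⟨hq0, hq1⟩, ?_, ?_⟩
    · exact (ENNReal.ofReal_le_iff_le_toReal (measure_ne_top ν _)).1 hFq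
    · have := (ENNReal.ofReal_le_iff_le_toReal (measure_ne_top ν _)).1 hGq
      rcases le_or_gt (1 - α) 0 with h | h
      · exact le_trans h ENNReal.toReal_nonneg
      · exact this
  have hsubS : quantSet α ν ⊆ S := by
    intro p hp
    exact ⟨hp.1, ENNReal.ofReal_le_of_le_toReal hp.2.1⟩
  have : sInf (quantSet α ν) = q := by
    apply le_antisymm
    · exact csInf_le ⟨0, fun x hx => hx.1.1⟩ hqmem
    · exact le_csInf ⟨q, hqmem⟩ fun p hp => csInf_le hbdd (hsubS hp)
  rw [this]; exact hqmem

lemma quantSet_subset_Icc (α : ℝ) (ν : Measure ℝ) : quantSet α ν ⊆ Icc (0:ℝ) 1 :=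
  fun _ h => h.1

lemma inf_quantSet_mem_Icc {α : ℝ} (hα : α ∈ Ioo (0:ℝ) 1) {ν : Measure ℝ} (hν : IsProb01 ν) :
    sInf (quantSet α ν) ∈ Icc (0:ℝ) 1 :=
  (quantSet_inf_mem hα hν).1

/-- below the inf of the quantile set, the cdf is `< α`. -/
lemma lt_of_lt_inf {α : ℝ} (hα : α ∈ Ioo (0:ℝ) 1) {ν : Measure ℝ} (hν : IsProb01 ν)
    {x : ℝ} (hx : x ∈ Icc (0:ℝ) 1) (hlt : x < sInf (quantSet α ν)) :
    (ν (Icc 0 x)).toReal < α := by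
  haveI := hν.1
  by_contra hcon
  push_neg at hcon
  have hp := quantSet_inf_mem hα hν
  have hG : 1 - α ≤ (ν (Icc x 1)).toReal := by
    refine le_trans hp.2.2 ?_
    exact ENNReal.toReal_mono (measure_ne_top ν _)
      (measure_mono (Icc_subset_Icc_left hlt.le))
  have : x ∈ quantSet α ν := ⟨hx, hcon, hG⟩
  exact absurd (csInf_le ⟨0, fun y hy => hy.1.1⟩ this) (not_le.2 hlt)

/-- lower bound for the quantile of a mixture. -/
lemma min_le_inf_mix {α : ℝ} (hα : α ∈ Ioo (0:ℝ) 1) {δ : ℝ} (hδ : δ ∈ Icc (0:ℝ) 1)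
    {μ0 μ1 : Measure ℝ} (h0 : IsProb01 μ0) (h1 : IsProb01 μ1) :
    min (sInf (quantSet α μ0)) (sInf (quantSet α μ1)) ≤ sInf (quantSet α (mix δ μ0 μ1)) := by
  haveI := h0.1; haveI := h1.1
  have hmix := isProb01_mix hδ h0 h1
  refine le_csInf ⟨_, quantSet_inf_mem hα hmix⟩ fun p hp => ?_
  by_contra hcon
  push_neg at hcon
  have hlt0 : p < sInf (quantSet α μ0) := lt_of_lt_of_le hcon (min_le_left _ _)
  have hlt1 : p < sInf (quantSet α μ1) := lt_of_lt_of_le hcon (min_le_right _ _)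
  have hF0 := lt_of_lt_inf hα h0 hp.1 hlt0
  have hF1 := lt_of_lt_inf hα h1 hp.1 hlt1
  have hFmix : α ≤ ((mix δ μ0 μ1) (Icc 0 p)).toReal := hp.2.1
  rw [mix_apply hδ] at hFmix
  rcases eq_or_lt_of_le hδ.1 with h | h
  · rw [← h] at hFmix; nlinarith
  · nlinarith [mul_lt_mul_of_pos_left hF1 h,
      mul_le_mul_of_nonneg_left hF0.le (by linarith [hδ.2] : (0:ℝ) ≤ 1-δ)]

lemma inf_quantSet_Ber_lt {α a : ℝ} (hα : α ∈ Ioo (0:ℝ) 1) (ha0 : 0 ≤ a) (ha : a < α) :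
    sInf (quantSet α (Ber a)) = 1 := by
  have ha1 : a ≤ 1 := le_trans ha.le hα.2.le
  have hmem : (1:ℝ) ∈ quantSet α (Ber a) := by
    refine ⟨⟨zero_le_one, le_refl 1⟩, ?_, ?_⟩
    · rw [Ber_apply11 ⟨ha0, ha1⟩ (by norm_num) (by norm_num)]
      exact hα.2.le
    · rw [Ber_apply01 ⟨ha0, ha1⟩ measurableSet_Icc (by norm_num) (by norm_num)]
      linarith
  apply le_antisymm
  · exact csInf_le ⟨0, fun y hy => hy.1.1⟩ hmem
  · refine le_csInf ⟨1, hmem⟩ fun q hq => ?_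
    by_contra hcon
    push_neg at hcon
    have hF : α ≤ ((Ber a) (Icc 0 q)).toReal := hq.2.1
    rw [Ber_apply10 ⟨ha0, ha1⟩ measurableSet_Icc ⟨le_refl 0, hq.1.1⟩
      (fun h => absurd h.2 (not_le.2 hcon))] at hF
    linarith

lemma inf_quantSet_Ber_ge {α a : ℝ} (hα : α ∈ Ioo (0:ℝ) 1) (ha : α ≤ a) (ha1 : a ≤ 1) :
    sInf (quantSet α (Ber a)) = 0 := by
  have ha0 : 0 ≤ a := le_trans hα.1.le ha
  have hmem : (0:ℝ) ∈ quantSet α (Ber a) := by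
    refine ⟨⟨le_refl 0, zero_le_one⟩, ?_, ?_⟩
    · rw [Ber_apply10 ⟨ha0, ha1⟩ measurableSet_Icc ⟨le_refl 0, le_refl 0⟩
        (by norm_num [mem_Icc])]
      exact ha
    · rw [Ber_apply11 ⟨ha0, ha1⟩ (by norm_num) (by norm_num)]
      linarith [hα.1]
  apply le_antisymm
  · exact csInf_le ⟨0, fun y hy => hy.1.1⟩ hmem
  · exact le_csInf ⟨0, hmem⟩ fun q hq => hq.1.1

lemma regret_le_half {α : ℝ} (hα : α ∈ Ioo (0:ℝ) 1) {μ0 : Measure ℝ} (h0 : IsProb01 μ0)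
    (hq0 : sInf (quantSet α μ0) = 1/2) {δ : ℝ} (hδ : δ ∈ Icc (0:ℝ) 1)
    {μ1 : Measure ℝ} (h1 : IsProb01 μ1) :
    regretKC α μ0 δ μ1 ≤ 1/2 := by
  have ht := inf_quantSet_mem_Icc hα h1
  have hmin := min_le_inf_mix hα hδ h0 h1
  rw [hq0] at hmin
  simp only [regretKC, quant_zero]
  rw [hq0]
  rcases le_total (sInf (quantSet α μ1)) (1/2) with h | h
  · rw [max_eq_left h]
    have : min (1/2 : ℝ) (sInf (quantSet α μ1)) = sInf (quantSet α μ1) := min_eq_right h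
    rw [this] at hmin
    linarith [ht.1]
  · rw [max_eq_right h]
    have : min (1/2 : ℝ) (sInf (quantSet α μ1)) = 1/2 := min_eq_left h
    rw [this] at hmin
    linarith [ht.2]

lemma exists_regret_half {α : ℝ} (hα : α ∈ Ioo (0:ℝ) 1) {μ0 : Measure ℝ} (h0 : IsProb01 μ0)
    (hq0 : sInf (quantSet α μ0) = 1/2) (hF : α < (μ0 (Icc 0 (1/2 : ℝ))).toReal)
    {δ : ℝ} (hδ : δ ∈ Icc (0:ℝ) 1) :
    ∃ μ1 : Measure ℝ, IsProb01 μ1 ∧ regretKC α μ0 δ μ1 = 1/2 := by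
  haveI := h0.1
  have hq0mem : (1/2 : ℝ) ∈ quantSet α μ0 := hq0 ▸ quantSet_inf_mem hα h0
  have hG0 : 1 - α ≤ (μ0 (Icc (1/2 : ℝ) 1)).toReal := hq0mem.2.2
  rcases eq_or_lt_of_le hδ.2 with h1δ | h1δ
  · -- δ = 1
    subst h1δ
    refine ⟨Ber α, isProb01_Ber ⟨hα.1.le, hα.2.le⟩, ?_⟩
    haveI := (isProb01_Ber ⟨hα.1.le, hα.2.le⟩).1
    have hb : sInf (quantSet α (Ber α)) = 0 := inf_quantSet_Ber_ge hα (le_refl α) hα.2.le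
    have hν : sInf (quantSet α (mix 1 μ0 (Ber α))) = 0 := by
      have hmem : (0:ℝ) ∈ quantSet α (mix 1 μ0 (Ber α)) := by
        refine ⟨⟨le_refl 0, zero_le_one⟩, ?_, ?_⟩
        · rw [mix_apply hδ]
          rw [Ber_apply10 ⟨hα.1.le, hα.2.le⟩ measurableSet_Icc ⟨le_refl 0, le_refl 0⟩
            (by norm_num [mem_Icc])]
          norm_num
        · rw [mix_apply hδ]
          rw [Ber_apply11 ⟨hα.1.le, hα.2.le⟩ (by norm_num) (by norm_num)]
          norm_num
          linarith [hα.1]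
      exact le_antisymm (csInf_le ⟨0, fun y hy => hy.1.1⟩ hmem)
        (le_csInf ⟨0, hmem⟩ fun q hq => hq.1.1)
    simp only [regretKC, quant_zero, hq0, hb, hν]
    norm_num
  · -- δ < 1
    have hcpos : (0:ℝ) < (μ0 (Icc 0 (1/2 : ℝ))).toReal - α := by linarith
    obtain ⟨a, ha0, hkey, haα⟩ :
        ∃ a : ℝ, 0 ≤ a ∧ α - (1-δ)*((μ0 (Icc 0 (1/2 : ℝ))).toReal - α) ≤ a ∧ a < α :=
      ⟨max 0 (α - (1-δ)*((μ0 (Icc 0 (1/2 : ℝ))).toReal - α)), le_max_left _ _,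
        le_max_right _ _, max_lt hα.1 (by nlinarith)⟩
    have ha1 : a ≤ 1 := le_trans haα.le hα.2.le
    refine ⟨Ber a, isProb01_Ber ⟨ha0, ha1⟩, ?_⟩
    haveI := (isProb01_Ber ⟨ha0, ha1⟩).1
    have hb : sInf (quantSet α (Ber a)) = 1 := inf_quantSet_Ber_lt hα ha0 haα
    have hν : sInf (quantSet α (mix δ μ0 (Ber a))) = 1/2 := by
      apply le_antisymm
      · refine csInf_le ⟨0, fun y hy => hy.1.1⟩ ?_
        refine ⟨⟨by norm_num, by norm_num⟩, ?_, ?_⟩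
        · rw [mix_apply hδ]
          rw [Ber_apply10 ⟨ha0, ha1⟩ measurableSet_Icc ⟨le_refl 0, by norm_num⟩
            (by norm_num [mem_Icc])]
          nlinarith [mul_le_mul_of_nonneg_left hkey hδ.1, mul_nonneg (mul_nonneg
            (by linarith : (0:ℝ) ≤ 1-δ) (by linarith : (0:ℝ) ≤ 1-δ)) hcpos.le]
        · rw [mix_apply hδ]
          rw [Ber_apply01 ⟨ha0, ha1⟩ measurableSet_Icc (by norm_num [mem_Icc]) (by norm_num)]
          nlinarith [hδ.1]
      · have := min_le_inf_mix hα hδ h0 (isProb01_Ber ⟨ha0, ha1⟩)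
        rw [hq0, hb, min_eq_left (by norm_num : (1/2:ℝ) ≤ 1)] at this
        exact this
    simp only [regretKC, quant_zero, hq0, hb, hν]
    norm_num

/-- no-data known-control setup with `q0 = 1/2`: every `δ ∈ [0,1]` has supremum
of regret `1/2`; consequently every `δ ∈ [0,1]` is minimax regret, with maximal regret `1/2`. -/
theorem stmt15 (α : ℝ) (hα : α ∈ Ioo (0 : ℝ) 1)
    (μ0 : Measure ℝ) (h0 : IsProb01 μ0)
    (q0 : ℝ) (hq0 : q0 = quant α 0 μ0)
    (hF : α < (μ0 (Icc 0 q0)).toReal) (hq : q0 = 1 / 2) :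
    (∀ δ ∈ Icc (0 : ℝ) 1, sSup (regretSetKC α μ0 δ) = 1 / 2) ∧
    (∀ δ ∈ Icc (0 : ℝ) 1, ∀ δ' ∈ Icc (0 : ℝ) 1,
      sSup (regretSetKC α μ0 δ) ≤ sSup (regretSetKC α μ0 δ')) := by
  have hinf : sInf (quantSet α μ0) = 1/2 := by
    rw [← quant_zero, ← hq0, hq]
  rw [hq] at hF
  have hmain : ∀ δ ∈ Icc (0 : ℝ) 1, sSup (regretSetKC α μ0 δ) = 1 / 2 := by
    intro δ hδ
    have hub : ∀ v ∈ regretSetKC α μ0 δ, v ≤ 1/2 := by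
      rintro v ⟨μ1, h1, rfl⟩
      exact regret_le_half hα h0 hinf hδ h1
    obtain ⟨μ1, h1, heq⟩ := exists_regret_half hα h0 hinf hF hδ
    have hmem : (1/2 : ℝ) ∈ regretSetKC α μ0 δ := ⟨μ1, h1, heq.symm⟩
    exact le_antisymm (csSup_le ⟨_, hmem⟩ hub) (le_csSup ⟨1/2, hub⟩ hmem)
  exact ⟨hmain, fun δ hδ δ' hδ' => by rw [hmain δ hδ, hmain δ' hδ']⟩
end
end

section
/- Covariate fixed-design setup with α ∈ (0,1) and r ∈ [0,1]. For every treatment rule δ there exists a state (μ_{t,x}) in which every μ_{t,x} is a Bernoulli measure Ber(a_{t,x}) (mass a_{t,x} at 0 and 1 − a_{t,x} at 1) such that R(δ) = 1 at that state. Consequently, for every treatment rule δ, the supremum over all states of R(δ) equals 1 and is attained, and every treatment rule is minimax regret (i.e., sup over states of R(δ) ≤ sup over states of R(δ') for every treatment rule δ'). -/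
open MeasureTheory Set
open scoped Classical ENNReal

noncomputable section

variable {𝒳 : Type*}

/-- Law of one observation on an arm with covariate-conditional outcome laws `μ x`:
`Σ_x π(x) · (Dirac(x) ⊗ μ x)` on `𝒳 × [0,1]`. -/
def lamCov [Fintype 𝒳] [MeasurableSpace 𝒳] (π : 𝒳 → ℝ) (μ : 𝒳 → Measure ℝ) :
    Measure (𝒳 × ℝ) :=
  ∑ x : 𝒳, ENNReal.ofReal (π x) • ((Measure.dirac x).prod (μ x))

/-- Outcome law when each covariate value `x` is treated with probability `c x`:
`ν(c) = Σ_x π(x) · (c_x · μ1 x + (1 − c_x) · μ0 x)`. -/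
def nuCov [Fintype 𝒳] (π : 𝒳 → ℝ) (μ0 μ1 : 𝒳 → Measure ℝ) (c : 𝒳 → ℝ) :
    Measure ℝ :=
  ∑ x : 𝒳, ENNReal.ofReal (π x) • mix (c x) (μ0 x) (μ1 x)

/-- The benchmark `sup_{c ∈ [0,1]^𝒳} q_{α,r}(ν(c))`. -/
def bestCov [Fintype 𝒳] (α r : ℝ) (π : 𝒳 → ℝ) (μ0 μ1 : 𝒳 → Measure ℝ) : ℝ :=
  sSup {v | ∃ c : 𝒳 → ℝ, (∀ x, c x ∈ Icc (0 : ℝ) 1) ∧ v = quant α r (nuCov π μ0 μ1 c)}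

/-- Law of the sample in the covariate fixed design: the first `N0` observations are i.i.d.
from `λ_0`, the last `N1` from `λ_1`. -/
def sampleLawCovFD [Fintype 𝒳] [MeasurableSpace 𝒳] (π : 𝒳 → ℝ) (N0 N1 : ℕ)
    (μ0 μ1 : 𝒳 → Measure ℝ) : Measure (Fin (N0 + N1) → 𝒳 × ℝ) :=
  Measure.pi fun i => if (i : ℕ) < N0 then lamCov π μ0 else lamCov π μ1

/-- Regret of a treatment rule in the covariate fixed design. -/
def regretCovFD [Fintype 𝒳] [MeasurableSpace 𝒳] (α r : ℝ) (π : 𝒳 → ℝ) (N0 N1 : ℕ)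
    (δ : (Fin (N0 + N1) → 𝒳 × ℝ) → 𝒳 → ℝ) (μ0 μ1 : 𝒳 → Measure ℝ) : ℝ :=
  bestCov α r π μ0 μ1 -
    quant α r (nuCov π μ0 μ1 fun x => ∫ w, δ w x ∂(sampleLawCovFD π N0 N1 μ0 μ1))

/-- The set of regret values of the rule `δ` over all states, covariate fixed design. -/
def regretSetCovFD [Fintype 𝒳] [MeasurableSpace 𝒳] (α r : ℝ) (π : 𝒳 → ℝ) (N0 N1 : ℕ)
    (δ : (Fin (N0 + N1) → 𝒳 × ℝ) → 𝒳 → ℝ) : Set ℝ :=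
  {v | ∃ μ0 μ1 : 𝒳 → Measure ℝ, (∀ x, IsProb01 (μ0 x)) ∧ (∀ x, IsProb01 (μ1 x)) ∧
      v = regretCovFD α r π N0 N1 δ μ0 μ1}

lemma Ber_apply (a : ℝ) (s : Set ℝ) :
    Ber a s = (if (0:ℝ) ∈ s then ENNReal.ofReal a else 0)
      + (if (1:ℝ) ∈ s then ENNReal.ofReal (1 - a) else 0) := by
  simp [Ber, Measure.dirac_apply, indicator_apply, mul_ite]

lemma Ber_toReal (a : ℝ) (ha0 : 0 ≤ a) (ha1 : a ≤ 1) (s : Set ℝ) :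
    (Ber a s).toReal = (if (0:ℝ) ∈ s then a else 0) + (if (1:ℝ) ∈ s then 1 - a else 0) := by
  rw [Ber_apply, ENNReal.toReal_add]
  · congr 1 <;> split_ifs <;> simp [ENNReal.toReal_ofReal, ha0, sub_nonneg.mpr ha1]
  · split_ifs <;> simp
  · split_ifs <;> simp

instance Ber_finite (a : ℝ) : IsFiniteMeasure (Ber a) := by
  constructor
  rw [Ber_apply]
  simp [ENNReal.add_lt_top]

lemma isProbBer {a : ℝ} (h0 : 0 ≤ a) (h1 : a ≤ 1) : IsProbabilityMeasure (Ber a) := by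
  constructor
  rw [Ber_apply]
  simp only [mem_univ, if_true]
  rw [← ENNReal.ofReal_add h0 (by linarith), ← ENNReal.ofReal_one]
  norm_num

lemma quant_mem_Icc {α r : ℝ} (hr : r ∈ Icc (0:ℝ) 1) (μ : Measure ℝ) :
    quant α r μ ∈ Icc (0:ℝ) 1 := by
  unfold quant
  rcases eq_or_ne (quantSet α μ) ∅ with h | h
  · rw [h]
    simp only [Real.sSup_empty, Real.sInf_empty, mul_zero, add_zero]
    exact ⟨le_refl 0, zero_le_one⟩
  · have hne : (quantSet α μ).Nonempty := nonempty_iff_ne_empty.mpr h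
    have hsub : quantSet α μ ⊆ Icc 0 1 := fun q hq => hq.1
    obtain ⟨q, hq⟩ := hne
    have hbdd : BddAbove (quantSet α μ) := ⟨1, fun y hy => (hsub hy).2⟩
    have hbdd' : BddBelow (quantSet α μ) := ⟨0, fun y hy => (hsub hy).1⟩
    have h1 : sSup (quantSet α μ) ≤ 1 := csSup_le ⟨q, hq⟩ fun y hy => (hsub hy).2
    have h2 : 0 ≤ sInf (quantSet α μ) := le_csInf ⟨q, hq⟩ fun y hy => (hsub hy).1
    have h3 : sInf (quantSet α μ) ≤ sSup (quantSet α μ) :=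
      (csInf_le hbdd' hq).trans (le_csSup hbdd hq)
    constructor
    · nlinarith [hr.1, hr.2]
    · nlinarith [hr.1, hr.2]

lemma quantSet_Ber_gt {α m : ℝ} (hα0 : 0 < α) (hm : α < m) (hm1 : m ≤ 1) :
    quantSet α (Ber m) = {0} := by
  have hm0 : (0:ℝ) ≤ m := le_of_lt (hα0.trans hm)
  ext q
  simp only [quantSet, mem_setOf_eq, mem_singleton_iff, mem_Icc]
  constructor
  · rintro ⟨⟨hq0, hq1⟩, _, h2⟩
    by_contra hne
    have hq : 0 < q := lt_of_le_of_ne hq0 (Ne.symm hne)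
    rw [Ber_toReal m hm0 hm1] at h2
    simp only [mem_Icc, le_refl, and_true, not_le.mpr hq, false_and, if_false, hq1,
      zero_le_one, true_and, zero_add] at h2
    split_ifs at h2 with hh
    · linarith
    · linarith
  · rintro rfl
    refine ⟨⟨le_refl 0, zero_le_one⟩, ?_, ?_⟩
    · rw [Ber_toReal m hm0 hm1]
      simp only [mem_Icc, le_refl, true_and, and_true]
      norm_num
      linarith
    · rw [Ber_toReal m hm0 hm1]
      simp only [mem_Icc, le_refl, true_and, and_true]
      norm_num
      linarith

lemma quantSet_Ber_lt {α m : ℝ} (hm0 : 0 ≤ m) (hm : m < α) (hα1 : α ≤ 1) :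
    quantSet α (Ber m) = {1} := by
  have hm1 : m ≤ 1 := le_of_lt (lt_of_lt_of_le hm hα1)
  ext q
  simp only [quantSet, mem_setOf_eq, mem_singleton_iff, mem_Icc]
  constructor
  · rintro ⟨⟨hq0, hq1⟩, h1, _⟩
    by_contra hne
    have hq : q < 1 := lt_of_le_of_ne hq1 hne
    rw [Ber_toReal m hm0 hm1] at h1
    simp only [mem_Icc, le_refl, true_and, hq0, if_true, not_le.mpr hq, and_false, if_false,
      add_zero] at h1
    linarith
  · rintro rfl
    refine ⟨⟨zero_le_one, le_refl 1⟩, ?_, ?_⟩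
    · rw [Ber_toReal m hm0 hm1]
      simp only [mem_Icc, le_refl, and_true, zero_le_one, true_and]
      norm_num
      linarith
    · rw [Ber_toReal m hm0 hm1]
      simp only [mem_Icc, le_refl, true_and, and_true]
      norm_num
      linarith

lemma quant_Ber_gt {α r m : ℝ} (hα0 : 0 < α) (hm : α < m) (hm1 : m ≤ 1) :
    quant α r (Ber m) = 0 := by
  unfold quant
  rw [quantSet_Ber_gt hα0 hm hm1, csSup_singleton, csInf_singleton]
  ring

lemma quant_Ber_lt {α r m : ℝ} (hm0 : 0 ≤ m) (hm : m < α) (hα1 : α ≤ 1) :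
    quant α r (Ber m) = 1 := by
  unfold quant
  rw [quantSet_Ber_lt hm0 hm hα1, csSup_singleton, csInf_singleton]
  ring

lemma nuCov_Ber [Fintype 𝒳] (π a0 a1 c : 𝒳 → ℝ)
    (hπ0 : ∀ x, 0 ≤ π x) (hπ1 : ∑ x : 𝒳, π x = 1)
    (ha0 : ∀ x, a0 x ∈ Icc (0:ℝ) 1) (ha1 : ∀ x, a1 x ∈ Icc (0:ℝ) 1)
    (hc : ∀ x, c x ∈ Icc (0:ℝ) 1) :
    nuCov π (fun x => Ber (a0 x)) (fun x => Ber (a1 x)) c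
      = Ber (∑ x : 𝒳, π x * (c x * a1 x + (1 - c x) * a0 x)) := by
  set A : 𝒳 → ℝ := fun x => c x * a1 x + (1 - c x) * a0 x with hA
  have hA0 : ∀ x, 0 ≤ A x := fun x => by
    show 0 ≤ c x * a1 x + (1 - c x) * a0 x
    have := (ha0 x).1; have := (ha1 x).1; have := (hc x).1; have := (hc x).2
    have h5 : 0 ≤ 1 - c x := by linarith
    positivity
  have hA1 : ∀ x, A x ≤ 1 := fun x => by
    show c x * a1 x + (1 - c x) * a0 x ≤ 1
    have h1 := (ha0 x).2; have h2 := (ha1 x).2; have h3 := (hc x).1; have h4 := (hc x).2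
    have e1 : c x * a1 x ≤ c x * 1 := mul_le_mul_of_nonneg_left h2 h3
    have e2 : (1 - c x) * a0 x ≤ (1 - c x) * 1 := mul_le_mul_of_nonneg_left h1 (by linarith)
    linarith
  ext s hs
  rw [nuCov, Measure.finset_sum_apply, Ber_apply]
  have hterm : ∀ x : 𝒳, (ENNReal.ofReal (π x) • mix (c x) (Ber (a0 x)) (Ber (a1 x))) s
      = (if (0:ℝ) ∈ s then ENNReal.ofReal (π x * A x) else 0)
        + (if (1:ℝ) ∈ s then ENNReal.ofReal (π x * (1 - A x)) else 0) := by
    intro x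
    have hc0 := (hc x).1; have hc1 := (hc x).2
    rw [Measure.smul_apply, mix, Measure.add_apply, Measure.smul_apply, Measure.smul_apply,
      Ber_apply, Ber_apply]
    have e0 : ENNReal.ofReal (π x * A x)
        = ENNReal.ofReal (π x) * (ENNReal.ofReal (c x) * ENNReal.ofReal (a1 x)
          + ENNReal.ofReal (1 - c x) * ENNReal.ofReal (a0 x)) := by
      rw [← ENNReal.ofReal_mul (hc x).1, ← ENNReal.ofReal_mul (by linarith : (0:ℝ) ≤ 1 - c x),
        ← ENNReal.ofReal_add (mul_nonneg hc0 (ha1 x).1) (mul_nonneg (by linarith) (ha0 x).1),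
        ← ENNReal.ofReal_mul (hπ0 x)]
    have e1 : ENNReal.ofReal (π x * (1 - A x))
        = ENNReal.ofReal (π x) * (ENNReal.ofReal (c x) * ENNReal.ofReal (1 - a1 x)
          + ENNReal.ofReal (1 - c x) * ENNReal.ofReal (1 - a0 x)) := by
      rw [← ENNReal.ofReal_mul (hc x).1, ← ENNReal.ofReal_mul (by linarith : (0:ℝ) ≤ 1 - c x),
        ← ENNReal.ofReal_add (mul_nonneg hc0 (by linarith [(ha1 x).2]))
          (mul_nonneg (by linarith) (by linarith [(ha0 x).2])),
        ← ENNReal.ofReal_mul (hπ0 x)]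
      congr 1
      ring
    rw [e0, e1]
    split_ifs <;> simp [smul_eq_mul] <;> ring
  rw [Finset.sum_congr rfl (fun x _ => hterm x), Finset.sum_add_distrib]
  have hsum0 : (∑ x : 𝒳, if (0:ℝ) ∈ s then ENNReal.ofReal (π x * A x) else 0)
      = if (0:ℝ) ∈ s then ENNReal.ofReal (∑ x : 𝒳, π x * A x) else 0 := by
    split_ifs with h
    · rw [ENNReal.ofReal_sum_of_nonneg]
      intro x _
      exact mul_nonneg (hπ0 x) (hA0 x)
    · simp
  have hsum1 : (∑ x : 𝒳, if (1:ℝ) ∈ s then ENNReal.ofReal (π x * (1 - A x)) else 0)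
      = if (1:ℝ) ∈ s then ENNReal.ofReal (1 - ∑ x : 𝒳, π x * A x) else 0 := by
    split_ifs with h
    · have e : ∑ x : 𝒳, π x * (1 - A x) = (1 : ℝ) - ∑ x : 𝒳, π x * A x := by
        have e2 : ∑ x : 𝒳, π x * (1 - A x) = (∑ x : 𝒳, π x) - ∑ x : 𝒳, π x * A x := by
          rw [← Finset.sum_sub_distrib]
          apply Finset.sum_congr rfl
          intro x _; ring
        rw [e2, hπ1]
      rw [← e, ENNReal.ofReal_sum_of_nonneg]
      intro x _
      exact mul_nonneg (hπ0 x) (by linarith [hA1 x])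
    · simp
  rw [hsum0, hsum1]

lemma dirac_prod_Ber [MeasurableSpace 𝒳] (x : 𝒳) (a : ℝ) :
    (Measure.dirac x).prod (Ber a) =
      ENNReal.ofReal a • Measure.dirac (x, (0:ℝ)) + ENNReal.ofReal (1 - a) • Measure.dirac (x, (1:ℝ)) := by
  rw [Measure.dirac_prod, Ber, Measure.map_add _ _ measurable_prodMk_left,
    Measure.map_smul, Measure.map_smul,
    Measure.map_dirac' measurable_prodMk_left, Measure.map_dirac' measurable_prodMk_left]

lemma isProb_lamCov_Ber [Fintype 𝒳] [MeasurableSpace 𝒳] (π : 𝒳 → ℝ)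
    (hπ0 : ∀ x, 0 ≤ π x) (hπ1 : ∑ x : 𝒳, π x = 1) (a : ℝ) (ha0 : 0 ≤ a) (ha1 : a ≤ 1) :
    IsProbabilityMeasure (lamCov π (fun _ => Ber a)) := by
  constructor
  rw [lamCov, Measure.finset_sum_apply]
  have : ∀ x : 𝒳, (ENNReal.ofReal (π x) • ((Measure.dirac x).prod (Ber a))) univ
      = ENNReal.ofReal (π x) := by
    intro x
    haveI := isProbBer ha0 ha1
    rw [Measure.smul_apply, measure_univ, smul_eq_mul, mul_one]
  rw [Finset.sum_congr rfl (fun x _ => this x), ← ENNReal.ofReal_sum_of_nonneg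
    (fun x _ => hπ0 x), hπ1, ENNReal.ofReal_one]

lemma lamCov_Ber_restrict [Fintype 𝒳] [MeasurableSpace 𝒳] (π : 𝒳 → ℝ) (a : ℝ) :
    (lamCov π (fun _ => Ber a)).restrict {p : 𝒳 × ℝ | p.2 = 0}
      = ENNReal.ofReal a • lamCov π (fun _ => Ber 1) := by
  have hS : MeasurableSet {p : 𝒳 × ℝ | p.2 = 0} :=
    measurable_snd (measurableSet_singleton (0:ℝ))
  ext t ht
  rw [Measure.restrict_apply ht, Measure.smul_apply]
  rw [lamCov, lamCov, Measure.finset_sum_apply, Measure.finset_sum_apply, Finset.smul_sum]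
  apply Finset.sum_congr rfl
  intro x _
  rw [dirac_prod_Ber, dirac_prod_Ber]
  have h0mem : ((x, (0:ℝ)) ∈ t ∩ {p : 𝒳 × ℝ | p.2 = 0}) ↔ (x, (0:ℝ)) ∈ t := by
    simp [mem_setOf_eq]
  have h1mem : ((x, (1:ℝ)) ∈ t ∩ {p : 𝒳 × ℝ | p.2 = 0}) = False := by
    simp [mem_setOf_eq]
  rw [Measure.smul_apply, Measure.smul_apply, Measure.add_apply, Measure.add_apply,
    Measure.smul_apply, Measure.smul_apply, Measure.smul_apply, Measure.smul_apply,
    Measure.dirac_apply' _ (ht.inter hS), Measure.dirac_apply' _ (ht.inter hS),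
    Measure.dirac_apply' _ ht, Measure.dirac_apply' _ ht]
  simp only [indicator_apply, h0mem, h1mem, Pi.one_apply, if_false, smul_eq_mul, sub_self,
    ENNReal.ofReal_zero, ENNReal.ofReal_one, zero_mul, mul_zero, add_zero, mul_one, one_mul]
  split_ifs with h <;> ring

lemma pi_restrict {ι : Type*} [Fintype ι] {β : ι → Type*} [∀ i, MeasurableSpace (β i)]
    (μ : ∀ i, Measure (β i)) [∀ i, IsFiniteMeasure (μ i)] (s : ∀ i, Set (β i))
    (hs : ∀ i, MeasurableSet (s i)) :
    (Measure.pi μ).restrict (univ.pi s) = Measure.pi (fun i => (μ i).restrict (s i)) := by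
  symm
  apply Measure.pi_eq
  intro t ht
  rw [Measure.restrict_apply (MeasurableSet.univ_pi ht), ← pi_inter_distrib, Measure.pi_pi]
  exact Finset.prod_congr rfl fun i _ => (Measure.restrict_apply (ht i)).symm

lemma pi_smul_const {ι : Type*} [Fintype ι] {β : Type*} [MeasurableSpace β]
    (c : ι → ℝ≥0∞) (hc : ∀ i, c i ≤ 1) (ν : Measure β) [IsProbabilityMeasure ν] :
    Measure.pi (fun i => c i • ν) = (∏ i, c i) • Measure.pi (fun _ : ι => ν) := by
  haveI hsf : SigmaFinite ν := inferInstance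
  haveI : ∀ i, IsFiniteMeasure (c i • ν) := fun i => by
    constructor
    rw [Measure.smul_apply, measure_univ, smul_eq_mul, mul_one]
    exact lt_of_le_of_lt (hc i) ENNReal.one_lt_top
  haveI : ∀ i : ι, SigmaFinite ((fun _ : ι => ν) i) := fun _ => hsf
  apply Measure.pi_eq
  intro t ht
  rw [Measure.smul_apply, Measure.pi_pi]
  simp only [Measure.smul_apply, smul_eq_mul]
  rw [Finset.prod_mul_distrib]

lemma prod_if_fin (N0 N1 : ℕ) (u v : ℝ≥0∞) :
    (∏ i : Fin (N0 + N1), (if (i : ℕ) < N0 then u else v)) = u ^ N0 * v ^ N1 := by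
  have h1 : ∀ i : Fin N0, (if ((Fin.castAdd N1 i : Fin (N0+N1)) : ℕ) < N0 then u else v) = u := by
    intro i; simp [i.isLt]
  have h2 : ∀ i : Fin N1, (if ((Fin.natAdd N0 i : Fin (N0+N1)) : ℕ) < N0 then u else v) = v := by
    intro i; simp [Nat.not_lt.mpr (Nat.le_add_right N0 i)]
  rw [Fin.prod_univ_add]
  rw [Finset.prod_congr rfl (fun i _ => h1 i), Finset.prod_congr rfl (fun i _ => h2 i),
    Finset.prod_const, Finset.prod_const, Finset.card_univ, Finset.card_univ,
    Fintype.card_fin, Fintype.card_fin]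

lemma sample_restrict [Fintype 𝒳] [MeasurableSpace 𝒳] (π : 𝒳 → ℝ)
    (hπ0 : ∀ x, 0 ≤ π x) (hπ1 : ∑ x : 𝒳, π x = 1) (N0 N1 : ℕ)
    (a0c a1c : ℝ) (h00 : 0 ≤ a0c) (h01 : a0c ≤ 1) (h10 : 0 ≤ a1c) (h11 : a1c ≤ 1) :
    (sampleLawCovFD π N0 N1 (fun _ => Ber a0c) (fun _ => Ber a1c)).restrict
        (univ.pi fun _ : Fin (N0+N1) => {p : 𝒳 × ℝ | p.2 = 0})
      = ENNReal.ofReal (a0c ^ N0 * a1c ^ N1)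
          • Measure.pi (fun _ : Fin (N0+N1) => lamCov π (fun _ => Ber 1)) := by
  haveI hP0 : IsProbabilityMeasure (lamCov π (fun _ : 𝒳 => Ber a0c)) :=
    isProb_lamCov_Ber π hπ0 hπ1 _ h00 h01
  haveI hP1 : IsProbabilityMeasure (lamCov π (fun _ : 𝒳 => Ber a1c)) :=
    isProb_lamCov_Ber π hπ0 hπ1 _ h10 h11
  haveI hQ1 : IsProbabilityMeasure (lamCov π (fun _ : 𝒳 => Ber 1)) :=
    isProb_lamCov_Ber π hπ0 hπ1 _ zero_le_one le_rfl
  have hS : MeasurableSet {p : 𝒳 × ℝ | p.2 = 0} :=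
    measurable_snd (measurableSet_singleton (0:ℝ))
  haveI hFin : ∀ i : Fin (N0+N1), IsFiniteMeasure
      (if (i:ℕ) < N0 then lamCov π (fun _ : 𝒳 => Ber a0c) else lamCov π (fun _ : 𝒳 => Ber a1c)) := by
    intro i
    by_cases h : (i:ℕ) < N0
    · rw [if_pos h]; infer_instance
    · rw [if_neg h]; infer_instance
  rw [sampleLawCovFD, pi_restrict _ _ (fun _ => hS)]
  have hfac : (fun i : Fin (N0+N1) =>
      (if (i:ℕ) < N0 then lamCov π (fun _ : 𝒳 => Ber a0c)
        else lamCov π (fun _ : 𝒳 => Ber a1c)).restrict {p : 𝒳 × ℝ | p.2 = 0})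
      = fun i : Fin (N0+N1) => (if (i:ℕ) < N0 then ENNReal.ofReal a0c else ENNReal.ofReal a1c)
          • lamCov π (fun _ : 𝒳 => Ber 1) := by
    funext i
    by_cases h : (i:ℕ) < N0
    · rw [if_pos h, if_pos h, lamCov_Ber_restrict]
    · rw [if_neg h, if_neg h, lamCov_Ber_restrict]
  rw [hfac, pi_smul_const _ (fun i => by split_ifs <;> exact ENNReal.ofReal_le_one.mpr (by assumption)),
    prod_if_fin, ENNReal.ofReal_mul (pow_nonneg h00 N0), ENNReal.ofReal_pow h00,
    ENNReal.ofReal_pow h10]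

lemma int_bounds {W : Type*} [MeasurableSpace W] (P Q : Measure W) [IsProbabilityMeasure P]
    [IsProbabilityMeasure Q] {E : Set W} (hE : MeasurableSet E) {t : ℝ} (ht0 : 0 ≤ t) (ht1 : t ≤ 1)
    (hres : P.restrict E = ENNReal.ofReal t • Q)
    (f : W → ℝ) (hf : Measurable f) (hf0 : ∀ w, 0 ≤ f w) (hf1 : ∀ w, f w ≤ 1) :
    t * ∫ w, f w ∂Q ≤ ∫ w, f w ∂P ∧ ∫ w, f w ∂P ≤ (1 - t) + t * ∫ w, f w ∂Q := by
  have hint : Integrable f P := by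
    apply Integrable.mono' (integrable_const (1:ℝ)) hf.aestronglyMeasurable
    filter_upwards with w
    rw [Real.norm_eq_abs, abs_le]
    exact ⟨by linarith [hf0 w], hf1 w⟩
  have hsplit := integral_add_compl hE hint
  have hEint : ∫ w in E, f w ∂P = t * ∫ w, f w ∂Q := by
    rw [show (∫ w in E, f w ∂P) = ∫ w, f w ∂(P.restrict E) from rfl, hres,
      integral_smul_measure, ENNReal.toReal_ofReal ht0, smul_eq_mul]
  have hPEc : P Eᶜ = ENNReal.ofReal (1 - t) := by
    have hPE : P E = ENNReal.ofReal t := by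
      rw [← Measure.restrict_apply_univ, hres, Measure.smul_apply, measure_univ, smul_eq_mul,
        mul_one]
    rw [measure_compl hE (measure_ne_top P E), hPE, measure_univ,
      ENNReal.ofReal_sub 1 ht0, ENNReal.ofReal_one]
  have hc0 : 0 ≤ ∫ w in Eᶜ, f w ∂P := integral_nonneg hf0
  have hc1 : ∫ w in Eᶜ, f w ∂P ≤ 1 - t := by
    have h1 : ∫ w in Eᶜ, f w ∂P ≤ ∫ _ in Eᶜ, (1:ℝ) ∂P :=
      integral_mono hint.restrict (integrable_const 1) hf1
    rw [setIntegral_const, measureReal_def, hPEc, ENNReal.toReal_ofReal (by linarith), smul_eq_mul, mul_one] at h1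
    exact h1
  constructor
  · linarith [hEint ▸ hsplit]
  · linarith [hEint ▸ hsplit]

lemma int_01 {W : Type*} [MeasurableSpace W] (P : Measure W) [IsProbabilityMeasure P]
    (f : W → ℝ) (hf : Measurable f) (hf0 : ∀ w, 0 ≤ f w) (hf1 : ∀ w, f w ≤ 1) :
    0 ≤ ∫ w, f w ∂P ∧ ∫ w, f w ∂P ≤ 1 := by
  have hint : Integrable f P := by
    apply Integrable.mono' (integrable_const (1:ℝ)) hf.aestronglyMeasurable
    filter_upwards with w
    rw [Real.norm_eq_abs, abs_le]
    exact ⟨by linarith [hf0 w], hf1 w⟩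
  refine ⟨integral_nonneg hf0, ?_⟩
  have := integral_mono hint (integrable_const (1:ℝ)) hf1
  rwa [integral_const, measureReal_def, measure_univ, ENNReal.toReal_one, one_smul] at this

lemma bestCov_le_one [Fintype 𝒳] {α r : ℝ} (hr : r ∈ Icc (0:ℝ) 1) (π : 𝒳 → ℝ)
    (μ0 μ1 : 𝒳 → Measure ℝ) : bestCov α r π μ0 μ1 ≤ 1 := by
  apply csSup_le
  · exact ⟨quant α r (nuCov π μ0 μ1 fun _ => 0), fun _ => 0,
      fun x => ⟨le_refl 0, zero_le_one⟩, rfl⟩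
  · rintro v ⟨c, hc, rfl⟩
    exact (quant_mem_Icc hr _).2

lemma regret_le_one [Fintype 𝒳] [MeasurableSpace 𝒳] {α r : ℝ} (hr : r ∈ Icc (0:ℝ) 1)
    (π : 𝒳 → ℝ) (N0 N1 : ℕ) (δ : (Fin (N0 + N1) → 𝒳 × ℝ) → 𝒳 → ℝ)
    (μ0 μ1 : 𝒳 → Measure ℝ) : regretCovFD α r π N0 N1 δ μ0 μ1 ≤ 1 := by
  have h1 := bestCov_le_one (α := α) hr π μ0 μ1
  have h2 := (quant_mem_Icc (α := α)
    hr (nuCov π μ0 μ1 fun x => ∫ w, δ w x ∂(sampleLawCovFD π N0 N1 μ0 μ1))).1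
  rw [regretCovFD]
  linarith

lemma sum_pi_const_mul [Fintype 𝒳] (π : 𝒳 → ℝ) (hπ1 : ∑ x : 𝒳, π x = 1) (t : ℝ) :
    ∑ x : 𝒳, π x * t = t := by
  rw [← Finset.sum_mul, hπ1, one_mul]

lemma regret_eq_one_of [Fintype 𝒳] [MeasurableSpace 𝒳]
    (α r : ℝ) (hα : α ∈ Ioo (0:ℝ) 1) (hr : r ∈ Icc (0:ℝ) 1)
    (π : 𝒳 → ℝ) (hπ : ∀ x, π x ∈ Ioc (0:ℝ) 1) (hπ1 : ∑ x : 𝒳, π x = 1)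
    (N0 N1 : ℕ) (δ : (Fin (N0 + N1) → 𝒳 × ℝ) → 𝒳 → ℝ)
    (hδm : ∀ x, Measurable fun w => δ w x)
    (hδ : ∀ w x, δ w x ∈ Icc (0:ℝ) 1)
    (a0c a1c : ℝ) (h00 : 0 ≤ a0c) (h01 : a0c ≤ 1) (h10 : 0 ≤ a1c) (h11 : a1c ≤ 1)
    (hgood : a0c < α ∨ a1c < α)
    (hbad : α < ∑ x : 𝒳, π x *
      ((∫ w, δ w x ∂(sampleLawCovFD π N0 N1 (fun _ => Ber a0c) (fun _ => Ber a1c))) * a1c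
      + (1 - ∫ w, δ w x ∂(sampleLawCovFD π N0 N1 (fun _ => Ber a0c) (fun _ => Ber a1c))) * a0c)) :
    regretCovFD α r π N0 N1 δ (fun _ => Ber a0c) (fun _ => Ber a1c) = 1 := by
  have hπ0 : ∀ x, 0 ≤ π x := fun x => le_of_lt (hπ x).1
  set P := sampleLawCovFD π N0 N1 (fun _ : 𝒳 => Ber a0c) (fun _ : 𝒳 => Ber a1c) with hP
  set p : 𝒳 → ℝ := fun x => ∫ w, δ w x ∂P with hp
  have hp01 : ∀ x, p x ∈ Icc (0:ℝ) 1 := by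
    haveI hP0 : IsProbabilityMeasure (lamCov π (fun _ : 𝒳 => Ber a0c)) :=
      isProb_lamCov_Ber π hπ0 hπ1 _ h00 h01
    haveI hP1 : IsProbabilityMeasure (lamCov π (fun _ : 𝒳 => Ber a1c)) :=
      isProb_lamCov_Ber π hπ0 hπ1 _ h10 h11
    haveI : ∀ i : Fin (N0+N1), IsProbabilityMeasure
        (if (i:ℕ) < N0 then lamCov π (fun _ : 𝒳 => Ber a0c)
          else lamCov π (fun _ : 𝒳 => Ber a1c)) := by
      intro i
      by_cases h : (i:ℕ) < N0
      · rw [if_pos h]; infer_instance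
      · rw [if_neg h]; infer_instance
    haveI : IsProbabilityMeasure P := by
      rw [hP, sampleLawCovFD]; infer_instance
    intro x
    exact int_01 P (fun w => δ w x) (hδm x) (fun w => (hδ w x).1) (fun w => (hδ w x).2)
  -- achieved outcome distribution
  have hnu : nuCov π (fun _ : 𝒳 => Ber a0c) (fun _ : 𝒳 => Ber a1c) p
      = Ber (∑ x : 𝒳, π x * (p x * a1c + (1 - p x) * a0c)) :=
    nuCov_Ber π (fun _ => a0c) (fun _ => a1c) p hπ0 hπ1
      (fun _ => ⟨h00, h01⟩) (fun _ => ⟨h10, h11⟩) hp01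
  set M := ∑ x : 𝒳, π x * (p x * a1c + (1 - p x) * a0c) with hM
  have hM1 : M ≤ 1 := by
    have hterm : ∀ x : 𝒳, p x * a1c + (1 - p x) * a0c ≤ 1 := by
      intro x
      have e1 : p x * a1c ≤ p x * 1 := mul_le_mul_of_nonneg_left h11 (hp01 x).1
      have e2 : (1 - p x) * a0c ≤ (1 - p x) * 1 :=
        mul_le_mul_of_nonneg_left h01 (by linarith [(hp01 x).2])
      linarith
    calc M ≤ ∑ x : 𝒳, π x := Finset.sum_le_sum fun x _ => by
              have := mul_le_mul_of_nonneg_left (hterm x) (hπ0 x)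
              linarith [this]
    _ = 1 := hπ1
  have hquant0 : quant α r (Ber M) = 0 := quant_Ber_gt hα.1 hbad hM1
  -- the benchmark equals 1
  have hbest : bestCov α r π (fun _ : 𝒳 => Ber a0c) (fun _ : 𝒳 => Ber a1c) = 1 := by
    apply IsGreatest.csSup_eq
    constructor
    · rcases hgood with hg | hg
      · refine ⟨fun _ => 0, fun x => ⟨le_refl 0, zero_le_one⟩, ?_⟩
        rw [nuCov_Ber π (fun _ => a0c) (fun _ => a1c) (fun _ => 0) hπ0 hπ1
          (fun _ => ⟨h00, h01⟩) (fun _ => ⟨h10, h11⟩) (fun _ => ⟨le_refl 0, zero_le_one⟩)]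
        have e : ∑ x : 𝒳, π x * ((0:ℝ) * a1c + (1 - 0) * a0c) = a0c := by
          have : ∀ x : 𝒳, π x * ((0:ℝ) * a1c + (1 - 0) * a0c) = π x * a0c := by
            intro x; ring
          rw [Finset.sum_congr rfl fun x _ => this x, sum_pi_const_mul π hπ1]
        rw [e, quant_Ber_lt h00 hg (le_of_lt hα.2)]
      · refine ⟨fun _ => 1, fun x => ⟨zero_le_one, le_refl 1⟩, ?_⟩
        rw [nuCov_Ber π (fun _ => a0c) (fun _ => a1c) (fun _ => 1) hπ0 hπ1
          (fun _ => ⟨h00, h01⟩) (fun _ => ⟨h10, h11⟩) (fun _ => ⟨zero_le_one, le_refl 1⟩)]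
        have e : ∑ x : 𝒳, π x * ((1:ℝ) * a1c + (1 - 1) * a0c) = a1c := by
          have : ∀ x : 𝒳, π x * ((1:ℝ) * a1c + (1 - 1) * a0c) = π x * a1c := by
            intro x; ring
          rw [Finset.sum_congr rfl fun x _ => this x, sum_pi_const_mul π hπ1]
        rw [e, quant_Ber_lt h10 hg (le_of_lt hα.2)]
    · rintro v ⟨c, hc, rfl⟩
      exact (quant_mem_Icc hr _).2
  rw [regretCovFD, ← hP, ← hp, hnu, hquant0, hbest]
  ring

set_option maxHeartbeats 1000000 in

lemma exists_regret_one [Fintype 𝒳] [MeasurableSpace 𝒳]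
    (α r : ℝ) (hα : α ∈ Ioo (0:ℝ) 1) (hr : r ∈ Icc (0:ℝ) 1)
    (π : 𝒳 → ℝ) (hπ : ∀ x, π x ∈ Ioc (0:ℝ) 1) (hπ1 : ∑ x : 𝒳, π x = 1)
    (N0 N1 : ℕ) (δ : (Fin (N0 + N1) → 𝒳 × ℝ) → 𝒳 → ℝ)
    (hδm : ∀ x, Measurable fun w => δ w x)
    (hδ : ∀ w x, δ w x ∈ Icc (0:ℝ) 1) :
    ∃ a0 a1 : 𝒳 → ℝ, (∀ x, a0 x ∈ Icc (0:ℝ) 1) ∧ (∀ x, a1 x ∈ Icc (0:ℝ) 1) ∧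
      regretCovFD α r π N0 N1 δ (fun x => Ber (a0 x)) (fun x => Ber (a1 x)) = 1 := by
  obtain ⟨hα0, hα1⟩ := hα
  have hπ0 : ∀ x, 0 ≤ π x := fun x => le_of_lt (hπ x).1
  have h1α : (0:ℝ) < 1 - α := by linarith
  have hα2 : (0:ℝ) < α / 2 := by linarith
  -- choice of the two near-α parameters
  set d1 : ℝ := min (α/2) ((1 - α) * (α/2)^N1 / 3) with hd1
  set d0 : ℝ := min (α/2) ((1 - α) * (α/2)^N0 / 3) with hd0
  have hd1pos : 0 < d1 := lt_min hα2 (by positivity)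
  have hd0pos : 0 < d0 := lt_min hα2 (by positivity)
  set h : ℝ := α - d1 with hh
  set g : ℝ := α - d0 with hg
  have hhlt : h < α := by simp [hh]; linarith
  have hglt : g < α := by simp [hg]; linarith
  have hhge : α/2 ≤ h := by
    have := min_le_left (α/2) ((1 - α) * (α/2)^N1 / 3)
    simp [hh]; linarith
  have hgge : α/2 ≤ g := by
    have := min_le_left (α/2) ((1 - α) * (α/2)^N0 / 3)
    simp [hg]; linarith
  have hhpos : 0 < h := lt_of_lt_of_le hα2 hhge
  have hgpos : 0 < g := lt_of_lt_of_le hα2 hgge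
  have hhle1 : h ≤ 1 := by linarith
  have hgle1 : g ≤ 1 := by linarith
  have key1 : d1 ≤ (1 - h) * h^N1 / 3 := by
    have e1 : d1 ≤ (1 - α) * (α/2)^N1 / 3 := min_le_right _ _
    have e2 : (α/2)^N1 ≤ h^N1 := pow_le_pow_left₀ (le_of_lt hα2) hhge N1
    have e3 : (1 - α) ≤ 1 - h := by linarith
    have e4 : (1 - α) * (α/2)^N1 ≤ (1 - h) * h^N1 :=
      mul_le_mul e3 e2 (by positivity) (by linarith)
    linarith
  have key0 : d0 ≤ (1 - g) * g^N0 / 3 := by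
    have e1 : d0 ≤ (1 - α) * (α/2)^N0 / 3 := min_le_right _ _
    have e2 : (α/2)^N0 ≤ g^N0 := pow_le_pow_left₀ (le_of_lt hα2) hgge N0
    have e3 : (1 - α) ≤ 1 - g := by linarith
    have e4 : (1 - α) * (α/2)^N0 ≤ (1 - g) * g^N0 :=
      mul_le_mul e3 e2 (by positivity) (by linarith)
    linarith
  have hd1eq : α - h = d1 := by rw [hh]; ring
  have hd0eq : α - g = d0 := by rw [hg]; ring
  clear_value d1 d0
  clear_value h g
  -- the two candidate adversarial states
  set PA := sampleLawCovFD π N0 N1 (fun _ : 𝒳 => Ber 1) (fun _ : 𝒳 => Ber h) with hPA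
  set PB := sampleLawCovFD π N0 N1 (fun _ : 𝒳 => Ber g) (fun _ : 𝒳 => Ber 1) with hPB
  by_cases caseA : α < ∑ x : 𝒳, π x * ((∫ w, δ w x ∂PA) * h + (1 - ∫ w, δ w x ∂PA) * 1)
  · refine ⟨fun _ => 1, fun _ => h, fun _ => ⟨zero_le_one, le_refl 1⟩,
      fun _ => ⟨le_of_lt hhpos, hhle1⟩, ?_⟩
    exact regret_eq_one_of α r ⟨hα0, hα1⟩ hr π hπ hπ1 N0 N1 δ hδm hδ 1 h zero_le_one (le_refl 1)
      (le_of_lt hhpos) hhle1 (Or.inr hhlt) caseA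
  by_cases caseB : α < ∑ x : 𝒳, π x * ((∫ w, δ w x ∂PB) * 1 + (1 - ∫ w, δ w x ∂PB) * g)
  · refine ⟨fun _ => g, fun _ => 1, fun _ => ⟨le_of_lt hgpos, hgle1⟩,
      fun _ => ⟨zero_le_one, le_refl 1⟩, ?_⟩
    exact regret_eq_one_of α r ⟨hα0, hα1⟩ hr π hπ hπ1 N0 N1 δ hδm hδ g 1 (le_of_lt hgpos) hgle1
      zero_le_one (le_refl 1) (Or.inl hglt) caseB
  -- contradiction case
  exfalso
  push_neg at caseA caseB
  -- probability instances
  haveI hQ1 : IsProbabilityMeasure (lamCov π (fun _ : 𝒳 => Ber 1)) :=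
    isProb_lamCov_Ber π hπ0 hπ1 _ zero_le_one le_rfl
  haveI hLh : IsProbabilityMeasure (lamCov π (fun _ : 𝒳 => Ber h)) :=
    isProb_lamCov_Ber π hπ0 hπ1 _ (le_of_lt hhpos) hhle1
  haveI hLg : IsProbabilityMeasure (lamCov π (fun _ : 𝒳 => Ber g)) :=
    isProb_lamCov_Ber π hπ0 hπ1 _ (le_of_lt hgpos) hgle1
  set Q0 := Measure.pi (fun _ : Fin (N0+N1) => lamCov π (fun _ : 𝒳 => Ber 1)) with hQ0
  haveI : ∀ i : Fin (N0+N1), IsProbabilityMeasure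
      ((fun _ : Fin (N0+N1) => lamCov π (fun _ : 𝒳 => Ber 1)) i) := fun _ => hQ1
  haveI hQ0prob : IsProbabilityMeasure Q0 := by rw [hQ0]; infer_instance
  haveI : ∀ i : Fin (N0+N1), IsProbabilityMeasure
      (if (i:ℕ) < N0 then lamCov π (fun _ : 𝒳 => Ber 1) else lamCov π (fun _ : 𝒳 => Ber h)) := by
    intro i; by_cases hi : (i:ℕ) < N0
    · rw [if_pos hi]; infer_instance
    · rw [if_neg hi]; infer_instance
  haveI hPAprob : IsProbabilityMeasure PA := by rw [hPA, sampleLawCovFD]; infer_instance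
  haveI : ∀ i : Fin (N0+N1), IsProbabilityMeasure
      (if (i:ℕ) < N0 then lamCov π (fun _ : 𝒳 => Ber g) else lamCov π (fun _ : 𝒳 => Ber 1)) := by
    intro i; by_cases hi : (i:ℕ) < N0
    · rw [if_pos hi]; infer_instance
    · rw [if_neg hi]; infer_instance
  haveI hPBprob : IsProbabilityMeasure PB := by rw [hPB, sampleLawCovFD]; infer_instance
  -- restriction identities
  have hE : MeasurableSet (univ.pi fun _ : Fin (N0+N1) => {p : 𝒳 × ℝ | p.2 = 0}) :=
    MeasurableSet.univ_pi fun _ => measurable_snd (measurableSet_singleton (0:ℝ))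
  have resA := sample_restrict π hπ0 hπ1 N0 N1 1 h zero_le_one le_rfl (le_of_lt hhpos) hhle1
  have resB := sample_restrict π hπ0 hπ1 N0 N1 g 1 (le_of_lt hgpos) hgle1 zero_le_one le_rfl
  set I : 𝒳 → ℝ := fun x => ∫ w, δ w x ∂Q0 with hI
  have hI01 : ∀ x, 0 ≤ I x ∧ I x ≤ 1 := fun x =>
    int_01 Q0 (fun w => δ w x) (hδm x) (fun w => (hδ w x).1) (fun w => (hδ w x).2)
  set Ibar := ∑ x : 𝒳, π x * I x with hIbar
  have hIbar1 : Ibar ≤ 1 := by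
    calc Ibar ≤ ∑ x : 𝒳, π x := Finset.sum_le_sum fun x _ => by
          have := mul_le_mul_of_nonneg_left (hI01 x).2 (hπ0 x); linarith
    _ = 1 := hπ1
  -- bounds from the A state
  have htA0 : (0:ℝ) ≤ 1^N0 * h^N1 := by positivity
  have htA1 : (1:ℝ)^N0 * h^N1 ≤ 1 := by
    rw [one_pow, one_mul]; exact pow_le_one₀ (le_of_lt hhpos) hhle1
  have hbA : ∀ x : 𝒳, ∫ w, δ w x ∂PA ≤ (1 - 1^N0 * h^N1) + (1^N0 * h^N1) * I x := fun x =>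
    (int_bounds PA Q0 hE htA0 htA1 resA (fun w => δ w x) (hδm x)
      (fun w => (hδ w x).1) (fun w => (hδ w x).2)).2
  have htB0 : (0:ℝ) ≤ g^N0 * 1^N1 := by positivity
  have htB1 : g^N0 * (1:ℝ)^N1 ≤ 1 := by
    rw [one_pow, mul_one]; exact pow_le_one₀ (le_of_lt hgpos) hgle1
  have hbB : ∀ x : 𝒳, (g^N0 * 1^N1) * I x ≤ ∫ w, δ w x ∂PB := fun x =>
    (int_bounds PB Q0 hE htB0 htB1 resB (fun w => δ w x) (hδm x)
      (fun w => (hδ w x).1) (fun w => (hδ w x).2)).1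
  -- rewrite the sums
  set SA := ∑ x : 𝒳, π x * ∫ w, δ w x ∂PA with hSA
  set SB := ∑ x : 𝒳, π x * ∫ w, δ w x ∂PB with hSB
  have hcaseA' : 1 - (1 - h) * SA ≤ α := by
    have e : ∀ x : 𝒳, π x * ((∫ w, δ w x ∂PA) * h + (1 - ∫ w, δ w x ∂PA) * 1)
        = π x - (1 - h) * (π x * ∫ w, δ w x ∂PA) := by intro x; ring
    rw [Finset.sum_congr rfl (fun x _ => e x), Finset.sum_sub_distrib, hπ1,
      ← Finset.mul_sum] at caseA
    exact caseA
  have hcaseB' : g + (1 - g) * SB ≤ α := by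
    have e : ∀ x : 𝒳, π x * ((∫ w, δ w x ∂PB) * 1 + (1 - ∫ w, δ w x ∂PB) * g)
        = π x * g + (1 - g) * (π x * ∫ w, δ w x ∂PB) := by intro x; ring
    rw [Finset.sum_congr rfl (fun x _ => e x), Finset.sum_add_distrib,
      ← Finset.mul_sum, sum_pi_const_mul π hπ1] at caseB
    exact caseB
  have hSAle : SA ≤ (1 - h^N1) + h^N1 * Ibar := by
    have e : ∀ x : 𝒳, π x * ∫ w, δ w x ∂PA
        ≤ π x * (1 - h^N1) + h^N1 * (π x * I x) := by
      intro x
      have := mul_le_mul_of_nonneg_left (hbA x) (hπ0 x)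
      simp only [one_pow, one_mul] at this
      linarith
    calc SA ≤ ∑ x : 𝒳, (π x * (1 - h^N1) + h^N1 * (π x * I x)) :=
          Finset.sum_le_sum fun x _ => e x
    _ = (1 - h^N1) + h^N1 * Ibar := by
        rw [Finset.sum_add_distrib, sum_pi_const_mul π hπ1, ← Finset.mul_sum]
  have hSBge : g^N0 * Ibar ≤ SB := by
    have e : ∀ x : 𝒳, g^N0 * (π x * I x) ≤ π x * ∫ w, δ w x ∂PB := by
      intro x
      have := mul_le_mul_of_nonneg_left (hbB x) (hπ0 x)
      simp only [one_pow, mul_one] at this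
      linarith
    calc g^N0 * Ibar = ∑ x : 𝒳, g^N0 * (π x * I x) := by rw [Finset.mul_sum]
    _ ≤ SB := Finset.sum_le_sum fun x _ => e x
  -- final contradiction
  have hvA : 0 < (1 - h) * h^N1 := by
    have : 0 < 1 - h := by linarith
    positivity
  have hvB : 0 < (1 - g) * g^N0 := by
    have : 0 < 1 - g := by linarith
    positivity
  have e1 : 1 - Ibar ≤ 1/3 := by
    have hmul := mul_le_mul_of_nonneg_left hSAle (by linarith : (0:ℝ) ≤ 1 - h)
    have expand : (1 - h) * ((1 - h^N1) + h^N1 * Ibar)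
        = (1 - h) - (1 - h) * h^N1 + ((1 - h) * h^N1) * Ibar := by ring
    have goalid : ((1 - h) * h^N1) * (1 - Ibar)
        = (1 - h) * h^N1 - ((1 - h) * h^N1) * Ibar := by ring
    have hfin : ((1 - h) * h^N1) * (1 - Ibar) ≤ ((1 - h) * h^N1) * (1/3) := by
      rw [goalid]
      rw [expand] at hmul
      linarith
    exact le_of_mul_le_mul_left hfin hvA
  have e2 : Ibar ≤ 1/3 := by
    have hmul := mul_le_mul_of_nonneg_left hSBge (by linarith : (0:ℝ) ≤ 1 - g)
    have expand : (1 - g) * (g^N0 * Ibar) = ((1 - g) * g^N0) * Ibar := by ring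
    have hfin : ((1 - g) * g^N0) * Ibar ≤ ((1 - g) * g^N0) * (1/3) := by
      rw [expand] at hmul
      linarith
    exact le_of_mul_le_mul_left hfin hvB
  linarith

lemma isProb01_Ber_s18 {a : ℝ} (h0 : 0 ≤ a) (h1 : a ≤ 1) : IsProb01 (Ber a) := by
  refine ⟨isProbBer h0 h1, ?_⟩
  rw [Ber_apply]
  simp only [mem_Icc, le_refl, zero_le_one, true_and, and_true, if_true]
  rw [← ENNReal.ofReal_add h0 (by linarith), ← ENNReal.ofReal_one]
  norm_num

/-- covariate fixed design with `α ∈ (0,1)`, `r ∈ [0,1]`: for every treatment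
rule there is a state with all marginals Bernoulli at which regret equals 1; hence the
supremum of regret over all states equals 1, is attained, and every rule is minimax regret. -/
theorem stmt18 [Fintype 𝒳] [Nonempty 𝒳] [MeasurableSpace 𝒳]
    (α r : ℝ) (hα : α ∈ Ioo (0 : ℝ) 1) (hr : r ∈ Icc (0 : ℝ) 1)
    (π : 𝒳 → ℝ) (hπ : ∀ x, π x ∈ Ioc (0 : ℝ) 1) (hπ1 : ∑ x : 𝒳, π x = 1)
    (N0 N1 : ℕ) (δ : (Fin (N0 + N1) → 𝒳 × ℝ) → 𝒳 → ℝ)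
    (hδm : ∀ x, Measurable fun w => δ w x)
    (hδ : ∀ w x, δ w x ∈ Icc (0 : ℝ) 1) :
    (∃ a0 a1 : 𝒳 → ℝ, (∀ x, a0 x ∈ Icc (0 : ℝ) 1) ∧ (∀ x, a1 x ∈ Icc (0 : ℝ) 1) ∧
        regretCovFD α r π N0 N1 δ (fun x => Ber (a0 x)) (fun x => Ber (a1 x)) = 1) ∧
    IsGreatest (regretSetCovFD α r π N0 N1 δ) 1 ∧
    (∀ δ' : (Fin (N0 + N1) → 𝒳 × ℝ) → 𝒳 → ℝ, (∀ x, Measurable fun w => δ' w x) →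
      (∀ w x, δ' w x ∈ Icc (0 : ℝ) 1) →
      sSup (regretSetCovFD α r π N0 N1 δ) ≤ sSup (regretSetCovFD α r π N0 N1 δ')) := by
  obtain ⟨a0, a1, ha0, ha1, hreg⟩ := exists_regret_one α r hα hr π hπ hπ1 N0 N1 δ hδm hδ
  have hmem1 : (1:ℝ) ∈ regretSetCovFD α r π N0 N1 δ :=
    ⟨fun x => Ber (a0 x), fun x => Ber (a1 x), fun x => isProb01_Ber_s18 (ha0 x).1 (ha0 x).2,
      fun x => isProb01_Ber_s18 (ha1 x).1 (ha1 x).2, hreg.symm⟩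
  have hub : ∀ v ∈ regretSetCovFD α r π N0 N1 δ, v ≤ 1 := by
    rintro v ⟨μ0, μ1, _, _, rfl⟩
    exact regret_le_one hr π N0 N1 δ μ0 μ1
  refine ⟨⟨a0, a1, ha0, ha1, hreg⟩, ⟨hmem1, hub⟩, ?_⟩
  intro δ' hδ'm hδ'
  obtain ⟨b0, b1, hb0, hb1, hreg'⟩ := exists_regret_one α r hα hr π hπ hπ1 N0 N1 δ' hδ'm hδ'
  have hmem1' : (1:ℝ) ∈ regretSetCovFD α r π N0 N1 δ' :=
    ⟨fun x => Ber (b0 x), fun x => Ber (b1 x), fun x => isProb01_Ber_s18 (hb0 x).1 (hb0 x).2,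
      fun x => isProb01_Ber_s18 (hb1 x).1 (hb1 x).2, hreg'.symm⟩
  have hub' : ∀ v ∈ regretSetCovFD α r π N0 N1 δ', v ≤ 1 := by
    rintro v ⟨μ0, μ1, _, _, rfl⟩
    exact regret_le_one hr π N0 N1 δ' μ0 μ1
  calc sSup (regretSetCovFD α r π N0 N1 δ) ≤ 1 := csSup_le ⟨1, hmem1⟩ hub
  _ ≤ sSup (regretSetCovFD α r π N0 N1 δ') := le_csSup ⟨1, hub'⟩ hmem1'
end
end
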